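/- Let δ_1,...,δ_n and δ̃_1,...,δ̃_n be two sequences in {0,1} differing in at most k positions, with Kaplan-Meier weights w and w̃ defined from them respectively (in product form w_i = (δ_i/n)∏_{j<i}((n-j+1)/(n-j))^{1-δ_j}). Then for any index r with k+1 ≤ r ≤ n−k such that δ_r = δ̃_r and the sets of indices j < r where the sequences differ has size at most k contained in {r−k,...,r+k−1} ∩ {1,...,r−1}, it holds that |w_r − w̃_r| ≤ w̃_r · k/(n − r − k + 1). -/

import Mathlib

/-!
Write `c_j = (n - j + 1)/(n - j) ≥ 1`, so that `w_r = (δ_r/n) ∏_{j<r} c_j^(1-δ_j)`. The two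
products share every factor outside the window `r - k ≤ j < r`, and inside it each factor of one
is at most `c_j` times the corresponding factor of the other, both being `1` or `c_j`. Hence each
product is at most the other times `M = ∏_{r-k ≤ j < r} c_j`, which telescopes to
`(n - r + k + 1)/(n - r + 1)`, and two positive numbers within a factor `M` of each other differ
by at most `M - 1` times either one: here `M - 1 = k/(n - r + 1) ≤ k/(n - r - k + 1)`.
-/

open Finset

theorem Finset.prod_Ico_div_succ₀ {G : Type*} [CommGroupWithZero G] {f : ℕ → G} {a b : ℕ}
    (hab : a ≤ b) (hf : ∀ i ∈ Icc a b, f i ≠ 0) :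
    ∏ i ∈ Ico a b, f i / f (i + 1) = f a / f b := by
  induction b, hab using Nat.le_induction with
  | base => simp [div_self (hf a (by simp))]
  | succ b hab ih =>
    rw [prod_Ico_succ_top hab, ih fun i hi => hf i (Icc_subset_Icc_right b.le_succ hi),
      div_mul_div_cancel₀ (hf b (by simp [hab]))]

theorem Finset.prod_le_prod_mul_prod_of_eqOn_sdiff {ι R : Type*} [DecidableEq ι]
    [CommSemiring R] [PartialOrder R] [IsOrderedRing R] {s t : Finset ι} {f g h : ι → R}
    (hts : t ⊆ s) (hf : ∀ i ∈ s, 0 ≤ f i) (hfg : ∀ i ∈ s \ t, f i = g i)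
    (hle : ∀ i ∈ t, f i ≤ g i * h i) :
    ∏ i ∈ s, f i ≤ (∏ i ∈ s, g i) * ∏ i ∈ t, h i := by
  rw [← prod_sdiff hts, ← prod_sdiff hts (f := g), prod_congr rfl hfg, mul_assoc,
    ← prod_mul_distrib]
  refine mul_le_mul_of_nonneg_left (prod_le_prod (fun i hi => hf i (hts hi)) hle) ?_
  exact prod_nonneg fun i hi => hfg i hi ▸ hf i (sdiff_subset hi)

theorem pow_one_sub_le_pow_one_sub_mul {R : Type*} [Semiring R] [PartialOrder R]
    [IsOrderedRing R] {c : R} (hc : 1 ≤ c) (x y : ℕ) : c ^ (1 - x) ≤ c ^ (1 - y) * c :=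
  calc c ^ (1 - x) ≤ c ^ 1 := pow_le_pow_right₀ hc (Nat.sub_le 1 x)
    _ = 1 * c := by rw [pow_one, one_mul]
    _ ≤ c ^ (1 - y) * c := mul_le_mul_of_nonneg_right (one_le_pow₀ hc) (zero_le_one.trans hc)

theorem abs_sub_le_mul_sub_one_of_le_mul {R : Type*} [CommRing R] [LinearOrder R]
    [IsStrictOrderedRing R] {x y m : R} (hm : 1 ≤ m) (hxy : x ≤ y * m)
    (hyx : y ≤ x * m) : |x - y| ≤ y * (m - 1) := by
  rw [abs_le]
  constructor
  · nlinarith [sq_nonneg (m - 1)]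
  · linarith

namespace KaplanMeier

noncomputable def factor (n j : ℕ) : ℝ := ((n : ℝ) - j + 1) / ((n : ℝ) - j)

/-- The Kaplan-Meier weight is `w_i = (δ_i / n) * weightProd n δ i`. -/
noncomputable def weightProd (n : ℕ) (δ : ℕ → ℕ) (i : ℕ) : ℝ :=
  ∏ j ∈ Icc 1 (i - 1), factor n j ^ (1 - δ j)

theorem one_le_factor {n j : ℕ} (h : j < n) : 1 ≤ factor n j := by
  have hj : (j : ℝ) < n := by exact_mod_cast h
  rw [factor, one_le_div (by linarith)]
  linarith

theorem prod_Ico_factor {n a b : ℕ} (hab : a ≤ b) (hbn : b ≤ n) :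
    ∏ j ∈ Ico a b, factor n j = ((n : ℝ) - a + 1) / ((n : ℝ) - b + 1) := by
  have hfactor : ∀ j : ℕ, factor n j = ((n : ℝ) - j + 1) / ((n : ℝ) - (j + 1 : ℕ) + 1) := by
    intro j
    rw [factor]
    push_cast
    ring
  simp only [hfactor]
  refine prod_Ico_div_succ₀ (f := fun j : ℕ => (n : ℝ) - j + 1) hab fun i hi => ?_
  have hi : (i : ℝ) ≤ n := by exact_mod_cast (mem_Icc.1 hi).2.trans hbn
  linarith

theorem weightProd_nonneg {n r : ℕ} (hrn : r ≤ n) (δ : ℕ → ℕ) : 0 ≤ weightProd n δ r :=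
  Finset.prod_nonneg fun j hj =>
    pow_nonneg (zero_le_one.trans (one_le_factor (by grind))) _

theorem weightProd_le_weightProd_mul {n r a : ℕ} {δ δ' : ℕ → ℕ} (ha : 1 ≤ a) (har : a ≤ r)
    (hrn : r ≤ n) (hwindow : ∀ j ∈ Icc 1 (r - 1), δ j ≠ δ' j → a ≤ j) :
    weightProd n δ r ≤ weightProd n δ' r * (((n : ℝ) - a + 1) / ((n : ℝ) - r + 1)) := by
  have hfactor : ∀ j ∈ Icc 1 (r - 1), 1 ≤ factor n j := fun j hj =>
    one_le_factor (by grind)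
  have hts : Ico a r ⊆ Icc 1 (r - 1) := fun j hj => by grind
  rw [← prod_Ico_factor har hrn, weightProd]
  refine prod_le_prod_mul_prod_of_eqOn_sdiff hts
    (fun j hj => pow_nonneg (zero_le_one.trans (hfactor j hj)) _) (fun j hj => ?_)
    (fun j hj => pow_one_sub_le_pow_one_sub_mul (hfactor j (hts hj)) _ _)
  rw [mem_sdiff, mem_Ico] at hj
  have hagree : δ j = δ' j := by_contra fun hne => hj.2 ⟨hwindow j hj.1 hne, by grind⟩
  rw [hagree]

theorem abs_weightProd_sub_le {n r a : ℕ} {δ δ' : ℕ → ℕ} (ha : 1 ≤ a) (har : a ≤ r)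
    (hrn : r ≤ n) (hwindow : ∀ j ∈ Icc 1 (r - 1), δ j ≠ δ' j → a ≤ j) :
    |weightProd n δ r - weightProd n δ' r| ≤
      weightProd n δ' r * (((r : ℝ) - a) / ((n : ℝ) - r + 1)) := by
  have hr : (r : ℝ) ≤ n := by exact_mod_cast hrn
  have har' : (a : ℝ) ≤ r := by exact_mod_cast har
  have hM : ((r : ℝ) - a) / ((n : ℝ) - r + 1) = ((n : ℝ) - a + 1) / ((n : ℝ) - r + 1) - 1 := by
    rw [div_sub_one (by linarith)]
    ring_nf
  rw [hM]
  refine abs_sub_le_mul_sub_one_of_le_mul ?_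
    (weightProd_le_weightProd_mul ha har hrn hwindow)
    (weightProd_le_weightProd_mul ha har hrn fun j hj hne => hwindow j hj (Ne.symm hne))
  rw [one_le_div (by linarith)]
  linarith

end KaplanMeier

open KaplanMeier in
theorem km_weights_proximity_general (n k : ℕ) (δ δt : ℕ → ℕ)
    (r : ℕ) (hr1 : k + 1 ≤ r) (hr2 : r + k ≤ n)
    (hre : δ r = δt r)
    (hsub : ((Finset.Icc 1 (r - 1)).filter fun j => δ j ≠ δt j)
      ⊆ Finset.Icc (r - k) (r + k - 1) ∩ Finset.Icc 1 (r - 1)) :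
    |(δ r : ℝ) / n *
        (∏ j ∈ Finset.Icc 1 (r - 1), (((n : ℝ) - j + 1) / ((n : ℝ) - j)) ^ (1 - δ j))
      - (δt r : ℝ) / n *
        (∏ j ∈ Finset.Icc 1 (r - 1), (((n : ℝ) - j + 1) / ((n : ℝ) - j)) ^ (1 - δt j))|
      ≤ ((δt r : ℝ) / n *
          (∏ j ∈ Finset.Icc 1 (r - 1), (((n : ℝ) - j + 1) / ((n : ℝ) - j)) ^ (1 - δt j)))
        * k / ((n : ℝ) - r - k + 1) := by
  have hwindow : ∀ j ∈ Icc 1 (r - 1), δ j ≠ δt j → r - k ≤ j := fun j hj hne =>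
    (mem_Icc.1 (mem_inter.1 (hsub (mem_filter.2 ⟨hj, hne⟩))).1).1
  have hprod := abs_weightProd_sub_le (n := n) (a := r - k) (by omega) (by omega) (by omega)
    hwindow
  have hgap : ((r : ℝ) - (r - k : ℕ)) / ((n : ℝ) - r + 1) ≤ k / ((n : ℝ) - r - k + 1) := by
    have hrk : ((r + k : ℕ) : ℝ) ≤ n := by exact_mod_cast hr2
    push_cast at hrk
    rw [Nat.cast_sub (by omega), sub_sub_cancel]
    exact div_le_div_of_nonneg_left k.cast_nonneg (by linarith) (by linarith)
  change |δ r / n * weightProd n δ r - δt r / n * weightProd n δt r| ≤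
    δt r / n * weightProd n δt r * k / _
  rw [hre, ← mul_sub, abs_mul, abs_of_nonneg (by positivity), mul_div_assoc, mul_assoc]
  gcongr
  exact hprod.trans (mul_le_mul_of_nonneg_left hgap (weightProd_nonneg (by omega) δt))

/-- Proximity of Kaplan-Meier weights on contaminated and clean samples: if the
censoring indicator sequences `δ, δ̃ ∈ {0,1}` differ in at most `k` positions, and
`r` is an index with `k+1 ≤ r ≤ n-k`, `δ_r = δ̃_r`, whose set of differing indices
`j < r` has size at most `k` and is contained in `{r-k,…,r+k-1} ∩ {1,…,r-1}`, then
`|w_r - w̃_r| ≤ w̃_r · k/(n - r - k + 1)` for the product-form weights. -/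
theorem km_weights_proximity (n k : ℕ) (hk : 1 ≤ k) (δ δt : ℕ → ℕ)
    (hδ : ∀ i, δ i ≤ 1) (hδt : ∀ i, δt i ≤ 1)
    (hdiff : ((Finset.Icc 1 n).filter fun i => δ i ≠ δt i).card ≤ k)
    (r : ℕ) (hr1 : k + 1 ≤ r) (hr2 : r + k ≤ n)
    (hre : δ r = δt r)
    (hsub : ((Finset.Icc 1 (r - 1)).filter fun j => δ j ≠ δt j)
      ⊆ Finset.Icc (r - k) (r + k - 1) ∩ Finset.Icc 1 (r - 1))
    (hcard : ((Finset.Icc 1 (r - 1)).filter fun j => δ j ≠ δt j).card ≤ k) :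
    |(δ r : ℝ) / n *
        (∏ j ∈ Finset.Icc 1 (r - 1), (((n : ℝ) - j + 1) / ((n : ℝ) - j)) ^ (1 - δ j))
      - (δt r : ℝ) / n *
        (∏ j ∈ Finset.Icc 1 (r - 1), (((n : ℝ) - j + 1) / ((n : ℝ) - j)) ^ (1 - δt j))|
      ≤ ((δt r : ℝ) / n *
          (∏ j ∈ Finset.Icc 1 (r - 1), (((n : ℝ) - j + 1) / ((n : ℝ) - j)) ^ (1 - δt j)))
        * k / ((n : ℝ) - r - k + 1) :=
  km_weights_proximity_general n k δ δt r hr1 hr2 hre hsub
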